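/- Let X and Y be nonempty sets, let F : X* → Y be a function, let H : X* → X ∪ {ε} be a B-associative ε-standard operation, and for each n ≥ 1 let f_n : ran(H_n) → Y be an injective function with F_n = f_n ∘ H_n. Then the following assertions are equivalent: (i) δ_{F_n} is injective for every n ≥ 1; (ii) δ_{H_n} is injective for every n ≥ 1; (iii) δ_{H_n} = id for every n ≥ 1 (i.e., H(u^n) = u for every u ∈ X and n ≥ 1). -/

import Mathlib

/-! Taking `x = z = ε` in B-associativity gives `H(u^n) = H(a^n)` with `a = H(u^n)`, so an
injective `δ_{H_n}` forces `a = u`. Since `F_n = f_n ∘ H_n`, injectivity of `δ_{F_n}` passes down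
to `δ_{H_n}`, and when `δ_{H_n} = id` the map `δ_{F_n} = f_n` is injective on all of `X`. -/

/-- `RepStr F y` is the string `F(y)^{|y|}`: `|y|` copies of `F y` if `F y ∈ X`,
and the empty string if `F y = ε` (here `ε` is encoded by `none`). -/
def RepStr {X : Type*} (F : List X → Option X) (y : List X) : List X :=
  match F y with
  | some a => List.replicate y.length a
  | none => []

/-- `F` is barycentrically associative. -/
def BAssoc {X : Type*} (F : List X → Option X) : Prop :=
  ∀ x y z : List X, F (x ++ y ++ z) = F (x ++ RepStr F y ++ z)

/-- `F` is ε-standard: `F x = ε` iff `x = ε`. -/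
def EpsStd {X : Type*} (F : List X → Option X) : Prop :=
  ∀ x : List X, F x = none ↔ x = []

/-- `F` is barycentrically preassociative. -/
def BPreassoc {X Y : Type*} (F : List X → Y) : Prop :=
  ∀ x y y' z : List X, y.length = y'.length → F y = F y' →
    F (x ++ y ++ z) = F (x ++ y' ++ z)

/-- `F` is arity-wise range-idempotent: `F (F(x)^{|x|}) = F x`. -/
def AWRI {X : Type*} (F : List X → Option X) : Prop :=
  ∀ x : List X, F (RepStr F x) = F x

/-- `F` is arity-wise quasi-range-idempotent: `ran δ_{F_n} = ran F_n` for all `n ≥ 1`. -/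
def AWQRI {X Y : Type*} (F : List X → Y) : Prop :=
  ∀ n : ℕ, 1 ≤ n →
    Set.range (fun u : X => F (List.replicate n u)) = F '' {l : List X | l.length = n}

/-- `g` is a quasi-inverse of `f`: `f (g b) = b` for every `b ∈ ran f`, and
`g (ran f) = ran g`. -/
def QuasiInv {α β : Type*} (f : α → β) (g : β → α) : Prop :=
  (∀ b ∈ Set.range f, f (g b) = b) ∧ g '' Set.range f = Set.range g

section

variable {X Y : Type*} {H : List X → Option X}

theorem EpsStd.exists_eq_some (hHs : EpsStd H) {l : List X} (hl : l ≠ []) :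
    ∃ a, H l = some a :=
  Option.ne_none_iff_exists'.mp fun h => hl ((hHs l).mp h)

theorem EpsStd.exists_apply_replicate_eq_some (hHs : EpsStd H) {n : ℕ} (hn : 1 ≤ n) (u : X) :
    ∃ a, H (List.replicate n u) = some a :=
  hHs.exists_eq_some (by simpa [List.replicate_eq_nil_iff] using Nat.one_le_iff_ne_zero.mp hn)

theorem repStr_of_eq_some {l : List X} {a : X} (h : H l = some a) :
    RepStr H l = List.replicate l.length a := by
  simp [RepStr, h]

theorem BAssoc.apply_replicate_of_eq_some (hH : BAssoc H) {l : List X} {a : X}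
    (h : H l = some a) : H (List.replicate l.length a) = some a := by
  have hl := hH [] l []
  simp only [List.nil_append, List.append_nil, repStr_of_eq_some h] at hl
  rw [← hl, h]

theorem BAssoc.apply_replicate_eq_self (hH : BAssoc H) (hHs : EpsStd H) {n : ℕ} (hn : 1 ≤ n)
    (hdiag : Function.Injective fun u : X => H (List.replicate n u)) (u : X) :
    H (List.replicate n u) = some u := by
  obtain ⟨a, ha⟩ := hHs.exists_apply_replicate_eq_some hn u
  have haa : H (List.replicate n a) = some a := by
    simpa using hH.apply_replicate_of_eq_some ha
  rw [ha, hdiag (haa.trans ha.symm)]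

variable {F : List X → Y} {g : X → Y} {n : ℕ}

theorem EpsStd.injective_diag_of_injective_diag_comp (hHs : EpsStd H) (hn : 1 ≤ n)
    (hcomp : ∀ l : List X, l.length = n → ∀ a : X, H l = some a → F l = g a)
    (hF : Function.Injective fun u : X => F (List.replicate n u)) :
    Function.Injective fun u : X => H (List.replicate n u) := by
  intro u v huv
  obtain ⟨a, ha⟩ := hHs.exists_apply_replicate_eq_some hn u
  apply hF
  change F (List.replicate n u) = F (List.replicate n v)
  rw [hcomp _ List.length_replicate a ha, hcomp _ List.length_replicate a (huv.symm.trans ha)]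

theorem injective_diag_comp_of_apply_replicate_eq_self
    (hg : Set.InjOn g {a : X | ∃ l : List X, l.length = n ∧ H l = some a})
    (hcomp : ∀ l : List X, l.length = n → ∀ a : X, H l = some a → F l = g a)
    (hid : ∀ u : X, H (List.replicate n u) = some u) :
    Function.Injective fun u : X => F (List.replicate n u) := by
  intro u v huv
  change F (List.replicate n u) = F (List.replicate n v) at huv
  rw [hcomp _ List.length_replicate u (hid u), hcomp _ List.length_replicate v (hid v)] at huv
  exact hg ⟨_, List.length_replicate, hid u⟩ ⟨_, List.length_replicate, hid v⟩ huv

end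

theorem stmt_16_general {X Y : Type*}
    (F : List X → Y) (H : List X → Option X)
    (hH : BAssoc H) (hHs : EpsStd H)
    (f : ℕ → X → Y)
    (hinj : ∀ n : ℕ, 1 ≤ n →
      Set.InjOn (f n) {a : X | ∃ l : List X, l.length = n ∧ H l = some a})
    (hcomp : ∀ n : ℕ, 1 ≤ n →
      ∀ l : List X, l.length = n → ∀ a : X, H l = some a → F l = f n a) :
    ((∀ n : ℕ, 1 ≤ n → Function.Injective fun u : X => F (List.replicate n u)) ↔
      (∀ n : ℕ, 1 ≤ n → Function.Injective fun u : X => H (List.replicate n u))) ∧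
    ((∀ n : ℕ, 1 ≤ n → Function.Injective fun u : X => F (List.replicate n u)) ↔
      (∀ n : ℕ, 1 ≤ n → ∀ u : X, H (List.replicate n u) = some u)) := by
  have diagF_to_diagH := fun (hF : ∀ n : ℕ, 1 ≤ n → _) n hn =>
    hHs.injective_diag_of_injective_diag_comp hn (hcomp n hn) (hF n hn)
  have diagH_to_id := fun (hdiag : ∀ n : ℕ, 1 ≤ n → _) n hn =>
    hH.apply_replicate_eq_self hHs hn (hdiag n hn)
  have id_to_diagF := fun (hid : ∀ n : ℕ, 1 ≤ n → _) n hn =>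
    injective_diag_comp_of_apply_replicate_eq_self (hinj n hn) (hcomp n hn) (hid n hn)
  exact ⟨⟨diagF_to_diagH, id_to_diagF ∘ diagH_to_id⟩, ⟨diagH_to_id ∘ diagF_to_diagH, id_to_diagF⟩⟩

/-- Let `H` be a B-associative ε-standard operation and for each
`n ≥ 1` let `f_n : ran H_n → Y` be injective with `F_n = f_n ∘ H_n`.  Then the
injectivity of all `δ_{F_n}`, the injectivity of all `δ_{H_n}`, and
`δ_{H_n} = id` for all `n ≥ 1` are equivalent. -/
theorem stmt_16 {X Y : Type*} [Nonempty X] [Nonempty Y]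
    (F : List X → Y) (H : List X → Option X)
    (hH : BAssoc H) (hHs : EpsStd H)
    (f : ℕ → X → Y)
    (hinj : ∀ n : ℕ, 1 ≤ n →
      Set.InjOn (f n) {a : X | ∃ l : List X, l.length = n ∧ H l = some a})
    (hcomp : ∀ n : ℕ, 1 ≤ n →
      ∀ l : List X, l.length = n → ∀ a : X, H l = some a → F l = f n a) :
    ((∀ n : ℕ, 1 ≤ n → Function.Injective fun u : X => F (List.replicate n u)) ↔
      (∀ n : ℕ, 1 ≤ n → Function.Injective fun u : X => H (List.replicate n u))) ∧
    ((∀ n : ℕ, 1 ≤ n → Function.Injective fun u : X => F (List.replicate n u)) ↔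
      (∀ n : ℕ, 1 ≤ n → ∀ u : X, H (List.replicate n u) = some u)) :=
  stmt_16_general F H hH hHs f hinj hcomp
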